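/- For n ≥ 2 and 1 ≤ r ≤ n−1, the number of 132-avoiding permutations of length n with exactly r short values satisfies |A(n, r)| = |A(n−1, r)| + |A(n, r−1)|. -/

import Mathlib

open List

attribute [local instance] Classical.propDecidable

/-- `l` is a permutation of length `n`, i.e. a list containing each of `1,…,n` exactly once. -/
def IsPermList (n : ℕ) (l : List ℕ) : Prop :=
  l.Perm (List.range' 1 n)

/-- Two sequences (with distinct entries) are order-isomorphic: same length and the same
pairwise order relations. -/
def OrderIsoList (a b : List ℕ) : Prop :=
  a.length = b.length ∧
    ∀ i j, i < j → j < a.length →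
      (a.getD i 0 < a.getD j 0 ↔ b.getD i 0 < b.getD j 0)

/-- `l` contains the pattern `p`: some subsequence of `l` is order-isomorphic to `p`. -/
def ContainsPat (l p : List ℕ) : Prop :=
  ∃ s, s.Sublist l ∧ OrderIsoList s p

/-- `l` avoids the pattern `p`. -/
def AvoidsPat (l p : List ℕ) : Prop := ¬ ContainsPat l p

/-- Relabel the entries of a list of distinct naturals order-isomorphically with `1,…,m`. -/
def standardize (l : List ℕ) : List ℕ :=
  l.map fun x => (l.filter fun y => y ≤ x).length

/-- Insert the new maximum value `l.length + 1` immediately after the first `i` entries. -/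
def insertMax (l : List ℕ) (i : ℕ) : List ℕ :=
  l.take i ++ (l.length + 1) :: l.drop i

/-- The insertion step at position `i` for the pattern `p`: insert a new maximum after the
first `i` entries, keep the longest prefix avoiding `p` (i.e. remove the minimal suffix so
that the result avoids `p`), then standardize. -/
noncomputable def insStep (p l : List ℕ) (i : ℕ) : List ℕ :=
  standardize ((insertMax l i).take
    (Nat.findGreatest (fun k => AvoidsPat ((insertMax l i).take k) p)
      (insertMax l i).length))

/-- The entry at (0-indexed) position `i` of `l` is a right-to-left maximum: it is larger
than every entry to its right. -/
def IsRLMax (l : List ℕ) (i : ℕ) : Prop :=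
  ∀ j, i < j → j < l.length → l.getD j 0 < l.getD i 0

/-- The number of short values of `l`: entries that are not right-to-left maxima. -/
noncomputable def shortCount (l : List ℕ) : ℕ :=
  {i | i < l.length ∧ ¬ IsRLMax l i}.ncard

/-- `A132 n k` is the set of `132`-avoiding permutations of length `n` with exactly `k`
short values. -/
def A132 (n k : ℕ) : Set (List ℕ) :=
  {l | IsPermList n l ∧ AvoidsPat l [1, 3, 2] ∧ shortCount l = k}

/-! Write a 132-avoiding permutation of `1, …, n + 1` as `l = P ++ (n + 1) :: R`. An entry of `P`
below an entry of `R` would form a 132 with `n + 1`, so `P` consists of the top values and `R` of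
the bottom ones: `l = (L ⊕ 1) ⊖ R` with `L`, `R` 132-avoiding, and conversely every such
permutation avoids 132. All entries of `P` are short, `n + 1` is not, and the entries of `R` keep
their status, so with `N(n, k) = |A(n, k)|` and Catalan numbers `C`,
`N(n + 1, k) = ∑_{a + b = n, a ≤ k} C a * N(b, k - a)`.
Induction on `n` through this convolution gives `N(q + 1, s + 1) = N(q, s + 1) + N(q + 1, s)`
termwise when `s + 1 < q`; in the boundary case `s + 1 = q` the identity reads
`C q = 0 + ∑_{a + b = q - 1} C a * C b`, the Catalan recursion. -/

section Pattern

variable {α β : Type*} [LinearOrder α] [LinearOrder β]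

def Has132 (l : List α) : Prop :=
  ∃ x y z, [x, y, z] <+ l ∧ x < z ∧ z < y

theorem not_has132_nil : ¬Has132 ([] : List α) :=
  fun ⟨_, _, _, h, _⟩ => by simp at h

theorem Has132.mono {s l : List α} (h : s <+ l) : Has132 s → Has132 l
  | ⟨x, y, z, hs, hxz, hzy⟩ => ⟨x, y, z, hs.trans h, hxz, hzy⟩

theorem has132_map_iff {f : α → β} (hf : StrictMono f) {l : List α} :
    Has132 (l.map f) ↔ Has132 l := by
  constructor
  · rintro ⟨x, y, z, hs, hxz, hzy⟩
    obtain ⟨l', hl', hmap⟩ := sublist_map_iff.1 hs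
    match l', hmap with
    | [x', y', z'], hmap =>
      simp only [map_cons, map_nil, cons.injEq, and_true] at hmap
      obtain ⟨rfl, rfl, rfl⟩ := hmap
      exact ⟨x', y', z', hl', hf.lt_iff_lt.1 hxz, hf.lt_iff_lt.1 hzy⟩
  · rintro ⟨x, y, z, hs, hxz, hzy⟩
    exact ⟨f x, f y, f z, hs.map f, hf hxz, hf hzy⟩

theorem has132_append_cons_iff {A B : List α} {m : α} (hA : ∀ x ∈ A, x < m)
    (hB : ∀ y ∈ B, y < m) :
    Has132 (A ++ m :: B) ↔ Has132 A ∨ Has132 B ∨ ∃ x ∈ A, ∃ y ∈ B, x < y := by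
  constructor
  · rintro ⟨x, y, z, hs, hxz, hzy⟩
    obtain ⟨l₁, l₂, hsplit, h₁, h₂⟩ := sublist_append_iff.1 hs
    have hle : ∀ w ∈ m :: B, w ≤ m := by
      simp only [mem_cons, forall_eq_or_imp, le_refl, true_and]
      exact fun w hw => (hB w hw).le
    have hzB (hz : z ∈ m :: B) (hy : y ∈ A ∨ y ∈ m :: B) : z ∈ B := by
      refine (mem_cons.1 hz).resolve_left ?_
      rintro rfl
      rcases hy with hy | hy
      · exact lt_asymm hzy (hA y hy)
      · exact not_le.2 hzy (hle y hy)
    -- split according to how many of `x, y, z` lie in `A`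
    rcases l₁ with _ | ⟨_, _ | ⟨_, _ | ⟨_, _ | ⟨_, _⟩⟩⟩⟩ <;>
      simp only [nil_append, cons_append, cons.injEq, reduceCtorEq, and_false] at hsplit
    · obtain rfl := hsplit
      rcases sublist_cons_iff.1 h₂ with h | ⟨r, hr, hrB⟩
      · exact Or.inr (Or.inl ⟨x, y, z, h, hxz, hzy⟩)
      · simp only [cons.injEq] at hr
        obtain ⟨rfl, rfl⟩ := hr
        exact absurd (hB z (hrB.subset (by simp))) (not_lt.2 hxz.le)
    · obtain ⟨rfl, rfl⟩ := hsplit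
      exact Or.inr (Or.inr ⟨x, h₁.subset (by simp), z,
        hzB (h₂.subset (by simp)) (Or.inr (h₂.subset (by simp))), hxz⟩)
    · obtain ⟨rfl, rfl, rfl⟩ := hsplit
      exact Or.inr (Or.inr ⟨x, h₁.subset (by simp), z,
        hzB (h₂.subset (by simp)) (Or.inl (h₁.subset (by simp))), hxz⟩)
    · obtain ⟨rfl, rfl, rfl, -⟩ := hsplit
      exact Or.inl ⟨x, y, z, h₁, hxz, hzy⟩
  · rintro (h | h | ⟨x, hx, y, hy, hxy⟩)
    · exact h.mono (sublist_append_left A _)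
    · exact h.mono ((sublist_cons_self m B).trans (sublist_append_right A _))
    · refine ⟨x, m, y, ?_, hxy, hB y hy⟩
      exact (singleton_sublist.2 hx).append (cons_sublist_cons.2 (singleton_sublist.2 hy))

theorem containsPat_132_iff {l : List ℕ} (hl : l.Nodup) :
    ContainsPat l [1, 3, 2] ↔ Has132 l := by
  constructor
  · rintro ⟨s, hs, hlen, hiso⟩
    obtain ⟨x, y, z, rfl⟩ := length_eq_three.1 hlen
    have hxz := (hiso 0 2 (by omega) (by simp)).2 (by decide)
    have hzy := (hiso 1 2 (by omega) (by simp)).not.2 (by decide)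
    have hyz : y ≠ z := by
      have := (hl.sublist hs)
      simp_all
    exact ⟨x, y, z, hs, hxz, lt_of_le_of_ne (not_lt.1 hzy) hyz.symm⟩
  · rintro ⟨x, y, z, hs, hxz, hzy⟩
    refine ⟨[x, y, z], hs, rfl, fun i j hij hj => ?_⟩
    simp only [length_cons, length_nil] at hj
    interval_cases j <;> interval_cases i <;> simp <;> omega

end Pattern

theorem shortCount_eq_sum (l : List ℕ) :
    shortCount l = ∑ i ∈ Finset.range l.length, if IsRLMax l i then 0 else 1 := by
  have hset : {i | i < l.length ∧ ¬IsRLMax l i} =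
      ↑({i ∈ Finset.range l.length | ¬IsRLMax l i}) := by
    ext i
    simp
  rw [shortCount, hset, Set.ncard_coe_finset, Finset.card_filter]
  simp only [ite_not]

theorem isRLMax_cons_zero (x : ℕ) (l : List ℕ) : IsRLMax (x :: l) 0 ↔ ∀ y ∈ l, y < x := by
  simp only [IsRLMax, length_cons, getD_cons_zero, mem_iff_getElem]
  constructor
  · rintro h y ⟨j, hj, rfl⟩
    simpa [hj] using h (j + 1) (by omega) (by omega)
  · rintro h (_ | j) hj hjl
    · omega
    · simpa [show j < l.length by omega] using h _ ⟨j, by omega, rfl⟩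

theorem isRLMax_cons_succ (x : ℕ) (l : List ℕ) (i : ℕ) :
    IsRLMax (x :: l) (i + 1) ↔ IsRLMax l i := by
  simp only [IsRLMax, length_cons, getD_cons_succ]
  constructor
  · intro h j hij hj
    simpa using h (j + 1) (by omega) (by omega)
  · rintro h (_ | j) hij hj
    · omega
    · simpa using h j (by omega) (by omega)

theorem shortCount_cons (x : ℕ) (l : List ℕ) :
    shortCount (x :: l) = shortCount l + if ∀ y ∈ l, y < x then 0 else 1 := by
  rw [shortCount_eq_sum, shortCount_eq_sum, length_cons, Finset.sum_range_succ']
  simp only [isRLMax_cons_succ, isRLMax_cons_zero]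

theorem shortCount_nil : shortCount [] = 0 := by
  simp [shortCount_eq_sum]

theorem shortCount_lt_length {l : List ℕ} (hl : l ≠ []) : shortCount l < l.length := by
  induction l with
  | nil => exact absurd rfl hl
  | cons x l ih =>
    rw [shortCount_cons, length_cons]
    rcases eq_or_ne l [] with rfl | hl'
    · simp [shortCount_nil]
    · have := ih hl'
      split <;> omega

theorem shortCount_append_cons {A B : List ℕ} {m : ℕ} (hA : ∀ x ∈ A, x < m)
    (hB : ∀ y ∈ B, y < m) : shortCount (A ++ m :: B) = A.length + shortCount B := by
  induction A with
  | nil => simpa [shortCount_cons] using hB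
  | cons x A ih =>
    have hx : ¬∀ y ∈ A ++ m :: B, y < x := fun h =>
      (hA x mem_cons_self).not_gt (h m (by simp))
    rw [cons_append, shortCount_cons, if_neg hx, ih fun y hy => hA y (mem_cons_of_mem x hy),
      length_cons]
    omega

theorem perm_and_perm_of_append_perm_of_lt {α : Type*} [LinearOrder α] {R P X Y : List α}
    (h : R ++ P ~ X ++ Y) (hlen : R.length = X.length)
    (hRP : ∀ r ∈ R, ∀ p ∈ P, r < p) (hXY : ∀ x ∈ X, ∀ y ∈ Y, x < y) :
    R ~ X ∧ P ~ Y := by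
  -- sorting both sides gives the same list, split at the same place
  let s := insertionSort (α := α) (· ≤ ·)
  have hs (U : List α) : s U ~ U := perm_insertionSort _ U
  have hsorted {U V : List α} (hUV : ∀ u ∈ U, ∀ v ∈ V, u < v) :
      (s U ++ s V).Pairwise (· ≤ ·) := by
    refine pairwise_append.2 ⟨pairwise_insertionSort _ _, pairwise_insertionSort _ _, ?_⟩
    intro u hu v hv
    exact (hUV u ((hs U).subset hu) v ((hs V).subset hv)).le
  have hperm : s R ++ s P ~ s X ++ s Y :=
    (((hs R).append (hs P)).trans h).trans ((hs X).append (hs Y)).symm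
  have heq := hperm.eq_of_pairwise (fun a b _ _ hab hba => le_antisymm hab hba)
    (hsorted hRP) (hsorted hXY)
  obtain ⟨hRX, hPY⟩ := append_inj heq (by simp [s, hlen])
  exact ⟨(hs R).symm.trans (hRX ▸ hs X), (hs P).symm.trans (hPY ▸ hs Y)⟩

theorem range'_one_append_range' (a b : ℕ) :
    range' 1 b ++ range' (b + 1) a = range' 1 (b + a) := by
  simpa [Nat.add_comm 1 b] using range'_append (s := 1) (m := b) (n := a) (step := 1)

theorem range'_one_succ_perm (m : ℕ) : range' 1 (m + 1) ~ (m + 1) :: range' 1 m := by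
  rw [range'_1_concat, Nat.add_comm 1 m]
  exact perm_append_singleton _ _

noncomputable def av132 (n : ℕ) : Finset (List ℕ) :=
  {l ∈ (range' 1 n).permutations.toFinset | ¬Has132 l}

theorem mem_av132 {n : ℕ} {l : List ℕ} : l ∈ av132 n ↔ l ~ range' 1 n ∧ ¬Has132 l := by
  simp [av132, mem_permutations]

theorem length_of_mem_av132 {n : ℕ} {l : List ℕ} (hl : l ∈ av132 n) : l.length = n := by
  simpa using (mem_av132.1 hl).1.length_eq

theorem mem_Icc_of_mem_av132 {n x : ℕ} {l : List ℕ} (hl : l ∈ av132 n) (hx : x ∈ l) :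
    1 ≤ x ∧ x ≤ n := by
  have := mem_range'_1.1 ((mem_av132.1 hl).1.subset hx)
  omega

/-- The permutation `(L ⊕ 1) ⊖ R`. -/
def joinMax (L R : List ℕ) : List ℕ :=
  L.map (R.length + ·) ++ (L.length + R.length + 1) :: R

theorem joinMax_eq {a b : ℕ} {L R : List ℕ} (hL : L ∈ av132 a) (hR : R ∈ av132 b) :
    joinMax L R = L.map (b + ·) ++ (a + b + 1) :: R := by
  rw [joinMax, length_of_mem_av132 hL, length_of_mem_av132 hR]

theorem mem_map_add_of_mem_av132 {a b x : ℕ} {L : List ℕ} (hL : L ∈ av132 a)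
    (hx : x ∈ L.map (b + ·)) : b < x ∧ x < a + b + 1 := by
  obtain ⟨y, hy, rfl⟩ := mem_map.1 hx
  have := mem_Icc_of_mem_av132 hL hy
  omega

theorem joinMax_mem_av132 {a b : ℕ} {L R : List ℕ} (hL : L ∈ av132 a) (hR : R ∈ av132 b) :
    joinMax L R ∈ av132 (a + b + 1) := by
  obtain ⟨hLp, hLav⟩ := mem_av132.1 hL
  obtain ⟨hRp, hRav⟩ := mem_av132.1 hR
  have hbound (y) (hy : y ∈ R) := mem_Icc_of_mem_av132 hR hy
  rw [joinMax_eq hL hR, mem_av132]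
  refine ⟨?_, ?_⟩
  · calc L.map (b + ·) ++ (a + b + 1) :: R
        ~ range' (b + 1) a ++ (a + b + 1) :: range' 1 b := by
          refine Perm.append ?_ (hRp.cons _)
          simpa [map_add_range'] using hLp.map (b + ·)
      _ ~ (a + b + 1) :: (range' 1 b ++ range' (b + 1) a) :=
          perm_middle.trans (perm_append_comm.cons _)
      _ = (b + a + 1) :: range' 1 (b + a) := by rw [range'_one_append_range', Nat.add_comm a b]
      _ ~ range' 1 (a + b + 1) := by rw [Nat.add_comm a b]; exact (range'_one_succ_perm _).symm
  · rw [has132_append_cons_iff (fun x hx => (mem_map_add_of_mem_av132 hL hx).2)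
      (fun y hy => by have := hbound y hy; omega), has132_map_iff add_right_strictMono]
    rintro (h | h | ⟨x, hx, y, hy, hxy⟩)
    · exact hLav h
    · exact hRav h
    · have := mem_map_add_of_mem_av132 hL hx
      have := hbound y hy
      omega

theorem shortCount_joinMax {a b : ℕ} {L R : List ℕ} (hL : L ∈ av132 a) (hR : R ∈ av132 b) :
    shortCount (joinMax L R) = a + shortCount R := by
  rw [joinMax_eq hL hR, shortCount_append_cons (fun x hx => (mem_map_add_of_mem_av132 hL hx).2)
    (fun y hy => by have := mem_Icc_of_mem_av132 hR hy; omega), length_map, length_of_mem_av132 hL]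

theorem idxOf_joinMax {a b : ℕ} {L R : List ℕ} (hL : L ∈ av132 a) (hR : R ∈ av132 b) :
    (joinMax L R).idxOf (a + b + 1) = a := by
  rw [joinMax_eq hL hR, idxOf_append_of_notMem fun h => (mem_map_add_of_mem_av132 hL h).2.false,
    idxOf_cons_self, length_map, length_of_mem_av132 hL, Nat.add_zero]

theorem joinMax_injective {L L' R R' : List ℕ} (hL : L.length = L'.length)
    (hR : R.length = R'.length) (h : joinMax L R = joinMax L' R') : L = L' ∧ R = R' := by
  rw [joinMax, joinMax, hL, hR] at h
  obtain ⟨hmap, hcons⟩ := append_inj h (by simp [hL])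
  exact ⟨map_injective_iff.2 (add_right_injective _) hmap, (cons.inj hcons).2⟩

theorem exists_map_add_eq_of_perm_range' {a b : ℕ} {P : List ℕ} (hP : P ~ range' (b + 1) a)
    (hPav : ¬Has132 P) : ∃ L ∈ av132 a, L.map (b + ·) = P := by
  have hshift : (P.map (· - b)).map (b + ·) = P := by
    rw [map_map]
    refine (map_congr_left fun x hx => ?_).trans (map_id P)
    have := mem_range'_1.1 (hP.subset hx)
    simp only [Function.comp_apply, id_eq]
    omega
  refine ⟨P.map (· - b), mem_av132.2 ⟨?_, fun h => hPav ?_⟩, hshift⟩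
  · simpa [map_sub_range'] using hP.map (· - b)
  · rwa [← hshift, has132_map_iff add_right_strictMono]

theorem exists_joinMax_eq {a b : ℕ} {l : List ℕ} (hl : l ∈ av132 (a + b + 1))
    (hidx : l.idxOf (a + b + 1) = a) : ∃ L ∈ av132 a, ∃ R ∈ av132 b, joinMax L R = l := by
  obtain ⟨hperm, hav⟩ := mem_av132.1 hl
  have hmax : a + b + 1 ∈ range' 1 (a + b + 1) := mem_range'_1.2 ⟨by omega, by omega⟩
  obtain ⟨P, R, rfl⟩ := append_of_mem (hperm.mem_iff.2 hmax)
  have hnd : (P ++ (a + b + 1) :: R).Nodup := hperm.nodup_iff.2 nodup_range'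
  have hnd' : (P ++ R).Nodup := (nodup_cons.1 (nodup_middle.1 hnd)).2
  have hnP : a + b + 1 ∉ P := fun h => (nodup_cons.1 (nodup_middle.1 hnd)).1 (mem_append_left _ h)
  have hPlen : P.length = a := by
    rwa [idxOf_append_of_notMem hnP, idxOf_cons_self, Nat.add_zero] at hidx
  have hPR : P ++ R ~ range' 1 (b + a) := by
    rw [← perm_cons (a + b + 1), Nat.add_comm b a]
    exact perm_middle.symm.trans (hperm.trans (range'_one_succ_perm _))
  have hlt (x) (hx : x ∈ P ++ R) : x < a + b + 1 := by
    have := mem_range'_1.1 (hPR.subset hx); omega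
  have hPlt (x) (hx : x ∈ P) := hlt x (mem_append_left _ hx)
  have hRlt (y) (hy : y ∈ R) := hlt y (mem_append_right _ hy)
  rw [has132_append_cons_iff hPlt hRlt] at hav
  simp only [not_or, not_exists, not_and, not_lt] at hav
  obtain ⟨hPav, hRav, hcross⟩ := hav
  have hRP : ∀ y ∈ R, ∀ x ∈ P, y < x := fun y hy x hx =>
    lt_of_le_of_ne (hcross x hx y hy) fun h => (nodup_append.1 hnd').2.2 x hx y hy h.symm
  have hsplit : R ++ P ~ range' 1 b ++ range' (b + 1) a := by
    rw [range'_one_append_range']; exact perm_append_comm.trans hPR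
  obtain ⟨hRperm, hPperm⟩ := perm_and_perm_of_append_perm_of_lt hsplit
    (by have := hPR.length_eq; simp at this ⊢; omega) hRP
    (fun x hx y hy => by rw [mem_range'_1] at hx hy; omega)
  obtain ⟨L, hL, rfl⟩ := exists_map_add_eq_of_perm_range' hPperm hPav
  have hR : R ∈ av132 b := mem_av132.2 ⟨hRperm, hRav⟩
  exact ⟨L, hL, R, hR, joinMax_eq hL hR⟩

section Counting

open scoped Finset
open Finset.HasAntidiagonal

theorem av132_zero : av132 0 = {[]} := by
  ext l
  simp only [mem_av132, range'_zero, perm_nil, Finset.mem_singleton, and_iff_left_iff_imp]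
  rintro rfl
  exact not_has132_nil

theorem filter_idxOf_av132 (a b : ℕ) :
    {l ∈ av132 (a + b + 1) | l.idxOf (a + b + 1) = a} =
      (av132 a ×ˢ av132 b).image fun LR => joinMax LR.1 LR.2 := by
  ext l
  simp only [Finset.mem_filter, Finset.mem_image, Finset.mem_product, Prod.exists]
  constructor
  · rintro ⟨hl, hidx⟩
    obtain ⟨L, hL, R, hR, rfl⟩ := exists_joinMax_eq hl hidx
    exact ⟨L, R, ⟨hL, hR⟩, rfl⟩
  · rintro ⟨L, R, ⟨hL, hR⟩, rfl⟩
    exact ⟨joinMax_mem_av132 hL hR, idxOf_joinMax hL hR⟩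

theorem card_filter_av132_succ (p : ℕ → Prop) [DecidablePred p] (n : ℕ) :
    #{l ∈ av132 (n + 1) | p (shortCount l)} =
      ∑ ab ∈ antidiagonal n, #(av132 ab.1) * #{R ∈ av132 ab.2 | p (ab.1 + shortCount R)} := by
  rw [Finset.card_eq_sum_card_fiberwise (f := fun l => l.idxOf (n + 1))
    (t := Finset.range (n + 1)) fun l hl => ?maps,
    Finset.Nat.sum_antidiagonal_eq_sum_range_succ_mk]
  case maps =>
    have hl := (Finset.mem_filter.1 hl).1
    have hmem : n + 1 ∈ l :=
      (mem_av132.1 hl).1.mem_iff.2 (mem_range'_1.2 ⟨by omega, by omega⟩)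
    simpa [← length_of_mem_av132 hl] using idxOf_lt_length_iff.2 hmem
  refine Finset.sum_congr rfl fun a ha => ?_
  obtain ⟨b, rfl⟩ : ∃ b, n = a + b := ⟨n - a, by simp at ha; omega⟩
  rw [Finset.filter_filter, Nat.add_sub_cancel_left]
  simp_rw [and_comm (a := p _)]
  rw [← Finset.filter_filter, filter_idxOf_av132, Finset.filter_image,
    Finset.card_image_of_injOn]
  · rw [← Finset.card_product, ← Finset.filter_product_right]
    refine congrArg _ (Finset.filter_congr fun LR hLR => ?_)
    rw [Finset.mem_product] at hLR
    rw [shortCount_joinMax hLR.1 hLR.2]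
  · rintro ⟨L, R⟩ hLR ⟨L', R'⟩ hLR' h
    rw [Finset.mem_coe, Finset.mem_filter, Finset.mem_product] at hLR hLR'
    obtain ⟨rfl, rfl⟩ := joinMax_injective
      ((length_of_mem_av132 hLR.1.1).trans (length_of_mem_av132 hLR'.1.1).symm)
      ((length_of_mem_av132 hLR.1.2).trans (length_of_mem_av132 hLR'.1.2).symm) h
    rfl

theorem card_av132 (n : ℕ) : #(av132 n) = catalan n := by
  induction n using Nat.strong_induction_on with
  | _ n ih =>
    rcases n with _ | n
    · simp [av132_zero]
    · have h := card_filter_av132_succ (fun _ => True) n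
      simp only [Finset.filter_true] at h
      rw [h, catalan_succ']
      refine Finset.sum_congr rfl fun ab hab => ?_
      rw [mem_antidiagonal] at hab
      rw [ih _ (by omega), ih _ (by omega)]

noncomputable def numA132 (n k : ℕ) : ℕ := #{l ∈ av132 n | shortCount l = k}

theorem ncard_A132 (n k : ℕ) : (A132 n k).ncard = numA132 n k := by
  have hA : A132 n k = ↑({l ∈ av132 n | shortCount l = k} : Finset (List ℕ)) := by
    ext l
    rw [Finset.coe_filter, Set.mem_ofPred_eq, mem_av132, and_assoc]
    refine and_congr_right fun hl => and_congr_left' (not_congr ?_)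
    exact containsPat_132_iff (hl.nodup_iff.2 nodup_range')
  rw [hA, Set.ncard_coe_finset, numA132]

theorem numA132_zero_left (k : ℕ) : numA132 0 k = if k = 0 then 1 else 0 := by
  simp only [numA132, av132_zero, Finset.filter_singleton, shortCount_nil]
  split_ifs <;> simp_all [eq_comm]

theorem numA132_succ (n k : ℕ) :
    numA132 (n + 1) k = ∑ ab ∈ antidiagonal n,
      if ab.1 ≤ k then catalan ab.1 * numA132 ab.2 (k - ab.1) else 0 := by
  rw [numA132, card_filter_av132_succ (· = k)]
  refine Finset.sum_congr rfl fun ab _ => ?_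
  rw [card_av132]
  split_ifs with h
  · exact congrArg (_ * ·) (congrArg _ (Finset.filter_congr fun R _ => by omega))
  · rw [Finset.filter_false_of_mem fun R _ => by omega, Finset.card_empty, mul_zero]

theorem numA132_zero_right (n : ℕ) : numA132 n 0 = 1 := by
  induction n with
  | zero => simp [numA132_zero_left]
  | succ n ih =>
    rw [numA132_succ, Finset.sum_eq_single (0, n)]
    · simp [ih]
    · rintro ⟨a, b⟩ hab hne
      rw [mem_antidiagonal] at hab
      rw [if_neg]
      rintro (h : a ≤ 0)
      exact hne (Prod.ext (by omega) (by simp; omega))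
    · simp

theorem numA132_self (n : ℕ) : numA132 (n + 1) (n + 1) = 0 := by
  rw [numA132, Finset.card_eq_zero, Finset.filter_eq_empty_iff]
  intro l hl h
  have hlen := length_of_mem_av132 hl
  have := shortCount_lt_length (l := l) (by rintro rfl; simp at hlen)
  omega

theorem numA132_succ_self (n : ℕ) : numA132 (n + 1) n = catalan n := by
  rw [numA132_succ, Finset.sum_eq_single (n, 0)]
  · simp [numA132_zero_left]
  · rintro ⟨a, _ | b⟩ hab hne
    · rw [mem_antidiagonal] at hab
      exact absurd (by simpa using hab) hne
    · rw [mem_antidiagonal] at hab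
      rw [if_pos (by omega), show n - a = b + 1 by omega, numA132_self, mul_zero]
  · simp

theorem numA132_succ_succ (q s : ℕ) (hsq : s < q) :
    numA132 (q + 1) (s + 1) = numA132 q (s + 1) + numA132 (q + 1) s := by
  induction q using Nat.strong_induction_on generalizing s with
  | _ q ih =>
    obtain ⟨p, rfl⟩ : ∃ p, q = p + 1 := ⟨q - 1, by omega⟩
    rcases Nat.lt_or_eq_of_le (Nat.le_of_lt_succ hsq) with hsp | rfl
    · rw [numA132_succ (p + 1), numA132_succ p, numA132_succ (p + 1) s,
        Finset.Nat.sum_antidiagonal_succ', Finset.Nat.sum_antidiagonal_succ', if_neg (by omega),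
        if_neg (by omega), Nat.zero_add, Nat.zero_add, ← Finset.sum_add_distrib]
      refine Finset.sum_congr rfl fun ⟨a, b⟩ hab => ?_
      rw [mem_antidiagonal] at hab
      dsimp only
      rcases lt_trichotomy a (s + 1) with has | rfl | has
      · rw [if_pos has.le, if_pos has.le, if_pos (by omega), show s + 1 - a = s - a + 1 by omega,
          ih b (by omega) (s - a) (by omega), Nat.mul_add]
      · simp [numA132_zero_right]
      · rw [if_neg (by omega), if_neg (by omega), if_neg (by omega)]
    · rw [numA132_succ_self, numA132_self, Nat.zero_add, numA132_succ,
        Finset.Nat.sum_antidiagonal_succ', if_neg (by omega), Nat.zero_add, catalan_succ']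
      refine Finset.sum_congr rfl fun ⟨a, b⟩ hab => ?_
      rw [mem_antidiagonal] at hab
      dsimp only
      rw [if_pos (by omega), show s - a = b by omega, numA132_succ_self]

end Counting

theorem card_A132_add_general (n r : ℕ) (hr1 : 1 ≤ r) (hr2 : r ≤ n - 1) :
    (A132 n r).ncard = (A132 (n - 1) r).ncard + (A132 n (r - 1)).ncard := by
  obtain ⟨q, rfl⟩ : ∃ q, n = q + 1 := ⟨n - 1, by omega⟩
  obtain ⟨s, rfl⟩ : ∃ s, r = s + 1 := ⟨r - 1, by omega⟩
  simp only [ncard_A132, Nat.add_sub_cancel]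
  exact numA132_succ_succ q s (by omega)

/-- For `n ≥ 2` and `1 ≤ r ≤ n-1`, `|A(n, r)| = |A(n-1, r)| + |A(n, r-1)|`. -/
theorem card_A132_add (n r : ℕ) (hn : 2 ≤ n) (hr1 : 1 ≤ r) (hr2 : r ≤ n - 1) :
    (A132 n r).ncard = (A132 (n - 1) r).ncard + (A132 n (r - 1)).ncard :=
  card_A132_add_general n r hr1 hr2
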